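/- If r < 1, then the fixed point x_l* = 1/(γ̲ + 2·b̄) of f is globally attracting: for every x ≥ 0 the iterates fⁿ(x) converge to x_l* as n → ∞. -/

import Mathlib

/-!
The fixed point `p = 1/(γ̲ + 2b̄)` lies on the left branch. With
`c = max r (γ̄/(γ̲ + 2b̄ - γ̄)) < 1`, `f` contracts distances to `p` on `[0, ∞)`:
`|f x - p| ≤ c |x - p|`. Left of `x_l` this is exact with slope `γ̲/(2b̄) ≤ c`. Right of `x_l`
one has `f x ≤ r x`, and `f` stays above the line through `(p, p)` of slope `-c`: it does so at
the breakpoints `x_l, x_u, x_m`, hence everywhere since `f` is affine in between and vanishes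
beyond `x_m`. Iterating, `|fⁿ x - p| ≤ cⁿ |x - p| → 0`.
-/

open Filter Topology Set

theorem tendsto_iterate_of_dist_le_mul {α : Type*} [PseudoMetricSpace α] {f : α → α}
    {s : Set α} {p : α} {c : ℝ} (hfs : MapsTo f s s) (hc0 : 0 ≤ c) (hc1 : c < 1)
    (hf : ∀ x ∈ s, dist (f x) p ≤ c * dist x p) {x : α} (hx : x ∈ s) :
    Tendsto (fun n ↦ f^[n] x) atTop (𝓝 p) := by
  have hbound : ∀ n : ℕ, dist (f^[n] x) p ≤ c ^ n * dist x p := by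
    intro n
    induction n with
    | zero => simp
    | succ n ih =>
      rw [Function.iterate_succ_apply', pow_succ', mul_assoc]
      exact (hf _ (hfs.iterate n hx)).trans (mul_le_mul_of_nonneg_left ih hc0)
  refine tendsto_iff_dist_tendsto_zero.2 (squeeze_zero (fun _ ↦ dist_nonneg) hbound ?_)
  simpa using (tendsto_pow_atTop_nhds_zero_of_lt_one hc0 hc1).mul_const (dist x p)

theorem add_mul_nonneg_of_mem_Icc {u v a b x : ℝ} (hx : x ∈ Icc a b) (ha : 0 ≤ u + v * a)
    (hb : 0 ≤ u + v * b) : 0 ≤ u + v * x := by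
  rcases le_total 0 v with hv | hv <;> nlinarith [hx.1, hx.2]

structure IsWorstCaseBestReply (bU bL gU gL r xl xu xm : ℝ) (f : ℝ → ℝ) : Prop where
  xl_nonneg : 0 ≤ xl
  xl_le_xu : xl ≤ xu
  xu_le_xm : xu ≤ xm
  eq_left : ∀ x, 0 ≤ x → x ≤ xl → f x = (1 - gL * x) / (2 * bU)
  eq_mid : ∀ x, xl ≤ x → x ≤ xu → f x = r * x
  eq_right : ∀ x, xu ≤ x → x ≤ xm → f x = (1 - gU * x) / (2 * bL)
  eq_zero : ∀ x, xm ≤ x → f x = 0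

theorem left_sub_eq_of_fixed {bU gL p : ℝ} (hp : (1 - gL * p) / (2 * bU) = p) (x : ℝ) :
    (1 - gL * x) / (2 * bU) - p = -(gL / (2 * bU)) * (x - p) := by
  calc (1 - gL * x) / (2 * bU) - p = (1 - gL * x) / (2 * bU) - (1 - gL * p) / (2 * bU) := by
        rw [hp]
    _ = -(gL / (2 * bU)) * (x - p) := by ring

theorem exists_contraction_const {bU gU gL r : ℝ} (hgL : 0 ≤ gL) (hgLU : gL < gU)
    (hgUbU : gU < bU) (hr1 : r < 1) :
    ∃ c < 1, r ≤ c ∧ gL / (2 * bU) ≤ c ∧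
      1 / (gL + 2 * bU) ≤ c * (1 / gU - 1 / (gL + 2 * bU)) := by
  have hgU : 0 < gU := hgL.trans_lt hgLU
  have hA : 0 < gL + 2 * bU := by linarith
  have hD : 0 < gL + 2 * bU - gU := by linarith
  -- `γ̄/(γ̲ + 2b̄ - γ̄)` is the slope of the chord from `(p, p)` down to `(x_m, 0)`.
  refine ⟨max r (gU / (gL + 2 * bU - gU)), max_lt hr1 ((div_lt_one hD).2 (by linarith)),
    le_max_left _ _, le_max_of_le_right (div_le_div₀ hgU.le hgLU.le hD (by linarith)), ?_⟩
  calc 1 / (gL + 2 * bU) = gU / (gL + 2 * bU - gU) * (1 / gU - 1 / (gL + 2 * bU)) := by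
        field_simp
    _ ≤ _ := by
        gcongr
        · exact sub_nonneg.2 (one_div_le_one_div_of_le hgU (by linarith))
        · exact le_max_right _ _

namespace IsWorstCaseBestReply

variable {bU bL gU gL r xl xu xm p c : ℝ} {f : ℝ → ℝ}

theorem left_at_xl (hf : IsWorstCaseBestReply bU bL gU gL r xl xu xm f) :
    (1 - gL * xl) / (2 * bU) = r * xl :=
  (hf.eq_left xl hf.xl_nonneg le_rfl).symm.trans (hf.eq_mid xl le_rfl hf.xl_le_xu)

theorem right_at_xu (hf : IsWorstCaseBestReply bU bL gU gL r xl xu xm f) :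
    (1 - gU * xu) / (2 * bL) = r * xu :=
  (hf.eq_right xu le_rfl hf.xu_le_xm).symm.trans (hf.eq_mid xu hf.xl_le_xu le_rfl)

theorem right_at_xm (hf : IsWorstCaseBestReply bU bL gU gL r xl xu xm f) :
    (1 - gU * xm) / (2 * bL) = 0 :=
  (hf.eq_right xm hf.xu_le_xm le_rfl).symm.trans (hf.eq_zero xm le_rfl)

theorem apply_nonneg (hf : IsWorstCaseBestReply bU bL gU gL r xl xu xm f) (hgL : 0 ≤ gL)
    (hgU : 0 ≤ gU) (hbU : 0 ≤ bU) (hbL : 0 ≤ bL) (hr : 0 ≤ r) {x : ℝ} (hx : 0 ≤ x) :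
    0 ≤ f x := by
  rcases le_total x xl with h1 | h1
  · rw [hf.eq_left x hx h1]
    calc 0 ≤ r * xl := mul_nonneg hr hf.xl_nonneg
      _ = (1 - gL * xl) / (2 * bU) := hf.left_at_xl.symm
      _ ≤ (1 - gL * x) / (2 * bU) := by gcongr
  rcases le_total x xu with h2 | h2
  · rw [hf.eq_mid x h1 h2]
    exact mul_nonneg hr hx
  rcases le_total x xm with h3 | h3
  · rw [hf.eq_right x h2 h3]
    calc (0 : ℝ) = (1 - gU * xm) / (2 * bL) := hf.right_at_xm.symm
      _ ≤ (1 - gU * x) / (2 * bL) := by gcongr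
  · rw [hf.eq_zero x h3]

theorem apply_le_mul (hf : IsWorstCaseBestReply bU bL gU gL r xl xu xm f) (hgU : 0 ≤ gU)
    (hbL : 0 ≤ bL) (hr : 0 ≤ r) {x : ℝ} (hx : xl ≤ x) : f x ≤ r * x := by
  rcases le_total x xu with h2 | h2
  · exact (hf.eq_mid x hx h2).le
  rcases le_total x xm with h3 | h3
  · rw [hf.eq_right x h2 h3]
    calc (1 - gU * x) / (2 * bL) ≤ (1 - gU * xu) / (2 * bL) := by gcongr
      _ = r * xu := hf.right_at_xu
      _ ≤ r * x := by gcongr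
  · rw [hf.eq_zero x h3]
    exact mul_nonneg hr (hf.xl_nonneg.trans hx)

theorem sub_mul_le_apply (hf : IsWorstCaseBestReply bU bL gU gL r xl xu xm f) (hr : 0 ≤ r)
    (hc : 0 ≤ c) (hxl : p - c * (xl - p) ≤ r * xl) (hxm : p ≤ c * (xm - p)) {x : ℝ}
    (hx : xl ≤ x) : p - c * (x - p) ≤ f x := by
  rcases le_total x xu with h2 | h2
  · rw [hf.eq_mid x hx h2]
    calc p - c * (x - p) ≤ p - c * (xl - p) := by gcongr
      _ ≤ r * xl := hxl
      _ ≤ r * x := by gcongr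
  rcases le_total x xm with h3 | h3
  · have hline : ∀ y, (1 - gU * y) / (2 * bL) - (p - c * (y - p)) =
        (1 / (2 * bL) - p - c * p) + (c - gU / (2 * bL)) * y := fun y ↦ by ring
    have hxu : p - c * (xu - p) ≤ (1 - gU * xu) / (2 * bL) := by
      calc p - c * (xu - p) ≤ p - c * (xl - p) := by gcongr; exact hf.xl_le_xu
        _ ≤ r * xl := hxl
        _ ≤ r * xu := by gcongr; exact hf.xl_le_xu
        _ = (1 - gU * xu) / (2 * bL) := hf.right_at_xu.symm
    rw [hf.eq_right x h2 h3, ← sub_nonneg, hline]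
    refine add_mul_nonneg_of_mem_Icc ⟨h2, h3⟩ ?_ ?_ <;> rw [← hline, sub_nonneg]
    · exact hxu
    · linarith [hf.right_at_xm]
  · rw [hf.eq_zero x h3]
    calc p - c * (x - p) ≤ p - c * (xm - p) := by gcongr
      _ ≤ 0 := by linarith

theorem abs_sub_le (hf : IsWorstCaseBestReply bU bL gU gL r xl xu xm f)
    (hp : (1 - gL * p) / (2 * bU) = p) (hp0 : 0 ≤ p) (hpl : p ≤ xl) (hgL : 0 ≤ gL)
    (hgU : 0 ≤ gU) (hbU : 0 ≤ bU) (hbL : 0 ≤ bL) (hr : 0 ≤ r) (hr1 : r ≤ 1) (hrc : r ≤ c)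
    (hsc : gL / (2 * bU) ≤ c) (hpm : p ≤ c * (xm - p)) {x : ℝ} (hx : 0 ≤ x) :
    |f x - p| ≤ c * |x - p| := by
  rcases le_total x xl with h1 | h1
  · rw [hf.eq_left x hx h1, left_sub_eq_of_fixed hp, abs_mul, abs_neg,
      abs_of_nonneg (by positivity)]
    gcongr
  have hpx : 0 ≤ x - p := sub_nonneg.2 (hpl.trans h1)
  rw [abs_of_nonneg hpx, abs_sub_le_iff]
  constructor
  · have hfx := hf.apply_le_mul hgU hbL hr h1
    linarith [mul_le_mul_of_nonneg_right hrc hpx, mul_le_of_le_one_left hp0 hr1]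
  · have hxl : p - c * (xl - p) ≤ r * xl := by
      have hs := mul_le_mul_of_nonneg_right hsc (sub_nonneg.2 hpl)
      linarith [left_sub_eq_of_fixed hp xl, hf.left_at_xl]
    linarith [hf.sub_mul_le_apply hr (hr.trans hrc) hxl hpm h1]

end IsWorstCaseBestReply

theorem left_fixed_point_globally_attracting_general
    (bU bL gU gL r xl xu xm : ℝ) (f : ℝ → ℝ)
    (h3 : bL ≥ gL) (h4 : gL ≥ 0)
    (h6 : bL < bU) (h7 : gL < gU)
    (hr : r = (gU - gL) / (bU - bL))
    (hxl : xl = 1 / (gL + 2 * bU * r))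
    (hxu : xu = 1 / (gU + 2 * bL * r))
    (hxm : xm = 1 / gU)
    (hf1 : ∀ x : ℝ, 0 ≤ x → x ≤ xl → f x = (1 - gL * x) / (2 * bU))
    (hf2 : ∀ x : ℝ, xl ≤ x → x ≤ xu → f x = r * x)
    (hf3 : ∀ x : ℝ, xu ≤ x → x ≤ xm → f x = (1 - gU * x) / (2 * bL))
    (hf4 : ∀ x : ℝ, xm ≤ x → f x = 0)
    (hrlt : r < 1) :
    f (1 / (gL + 2 * bU)) = 1 / (gL + 2 * bU) ∧
    ∀ x : ℝ, 0 ≤ x →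
      Filter.Tendsto (fun n => f^[n] x) Filter.atTop (nhds (1 / (gL + 2 * bU))) := by
  have hbL : 0 ≤ bL := h4.trans h3
  have hbU : 0 < bU := hbL.trans_lt h6
  have hrb : r * (bU - bL) = gU - gL := by rw [hr]; field_simp [sub_ne_zero.2 h6.ne']
  have hr0 : 0 < r := by rw [hr]; exact div_pos (sub_pos.2 h7) (sub_pos.2 h6)
  have hgU : 0 < gU := h4.trans_lt h7
  have hgUbU : gU < bU := by nlinarith [mul_lt_mul_of_pos_right hrlt (sub_pos.2 h6)]
  subst hxl hxu hxm
  have hf : IsWorstCaseBestReply bU bL gU gL r (1 / (gL + 2 * bU * r))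
      (1 / (gU + 2 * bL * r)) (1 / gU) f :=
    ⟨by positivity, one_div_le_one_div_of_le (by positivity) (by linarith),
      one_div_le_one_div_of_le hgU (by nlinarith), hf1, hf2, hf3, hf4⟩
  have hp : (1 - gL * (1 / (gL + 2 * bU))) / (2 * bU) = 1 / (gL + 2 * bU) := by
    field_simp
    ring
  have hpl : 1 / (gL + 2 * bU) ≤ 1 / (gL + 2 * bU * r) :=
    one_div_le_one_div_of_le (by positivity) (by nlinarith)
  obtain ⟨c, hc1, hrc, hsc, hpm⟩ := exists_contraction_const h4 h7 hgUbU hrlt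
  refine ⟨(hf.eq_left _ (by positivity) hpl).trans hp, fun x hx ↦ ?_⟩
  refine tendsto_iterate_of_dist_le_mul (s := Ici 0)
    (fun y hy ↦ hf.apply_nonneg h4 (by linarith) hbU.le hbL hr0.le hy) (hr0.le.trans hrc) hc1
    (fun y hy ↦ ?_) hx
  simpa only [Real.dist_eq] using hf.abs_sub_le hp (by positivity) hpl h4 (by linarith) hbU.le
    hbL hr0.le hrlt.le hrc hsc hpm hy

/-- If r < 1, the fixed point x_l* = 1/(γ̲ + 2b̄) of f is globally
attracting on [0,∞). -/
theorem left_fixed_point_globally_attracting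
    (bU bL gU gL r xl xu xm : ℝ) (f : ℝ → ℝ)
    (h1 : bU ≥ gU) (h2 : gU ≥ bL) (h3 : bL ≥ gL) (h4 : gL ≥ 0)
    (h5 : 0 < bL) (h6 : bL < bU) (h7 : gL < gU)
    (hr : r = (gU - gL) / (bU - bL))
    (hxl : xl = 1 / (gL + 2 * bU * r))
    (hxu : xu = 1 / (gU + 2 * bL * r))
    (hxm : xm = 1 / gU)
    (hf1 : ∀ x : ℝ, 0 ≤ x → x ≤ xl → f x = (1 - gL * x) / (2 * bU))
    (hf2 : ∀ x : ℝ, xl ≤ x → x ≤ xu → f x = r * x)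
    (hf3 : ∀ x : ℝ, xu ≤ x → x ≤ xm → f x = (1 - gU * x) / (2 * bL))
    (hf4 : ∀ x : ℝ, xm ≤ x → f x = 0)
    (hrlt : r < 1) :
    f (1 / (gL + 2 * bU)) = 1 / (gL + 2 * bU) ∧
    ∀ x : ℝ, 0 ≤ x →
      Filter.Tendsto (fun n => f^[n] x) Filter.atTop (nhds (1 / (gL + 2 * bU))) :=
  left_fixed_point_globally_attracting_general bU bL gU gL r xl xu xm f h3 h4 h6 h7 hr hxl hxu hxm
    hf1 hf2 hf3 hf4 hrlt
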